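/- arXiv:1708.08967 — 4 statements merged into one kernel-verified Lean document; each statement's English description precedes it below -/
import Mathlib

section
/- If T is a tree on n ≥ 4 vertices, then SEI_a(T) ≤ (n−1)a^{n−1} + (n−1)a for every real a > 1, with equality if and only if T is isomorphic to the star S_n (the tree with one vertex of degree n−1 and n−1 vertices of degree 1). -/
open Finset Real

/-- The degree of a vertex `v` in a graph `G` (number of neighbours). -/
noncomputable def deg {n : ℕ} (G : SimpleGraph (Fin n)) (v : Fin n) : ℕ :=
  Nat.card (G.neighborSet v)

/-- The zeroth-order general Randć index `R⁰_α(G) = Σ_v (d_v)^α`. -/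
noncomputable def R0 {n : ℕ} (G : SimpleGraph (Fin n)) (α : ℝ) : ℝ :=
  ∑ v : Fin n, (deg G v : ℝ) ^ α

/-- The variable sum exdeg index `SEI_a(G) = Σ_v d_v · a^{d_v}`. -/
noncomputable def SEI {n : ℕ} (G : SimpleGraph (Fin n)) (a : ℝ) : ℝ :=
  ∑ v : Fin n, (deg G v : ℝ) * a ^ (deg G v)

/-- The number of vertices of `G` having degree `d`. -/
noncomputable def countDeg {n : ℕ} (G : SimpleGraph (Fin n)) (d : ℕ) : ℕ :=
  Nat.card {v : Fin n // deg G v = d}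

/-- The number of branching vertices (vertices of degree greater than 2) of `G`. -/
noncomputable def branching {n : ℕ} (G : SimpleGraph (Fin n)) : ℕ :=
  Nat.card {v : Fin n // 2 < deg G v}

/-- The star graph on `Fin n`, with centre the vertex with value `0`. -/
def starGraph (n : ℕ) : SimpleGraph (Fin n) :=
  SimpleGraph.fromRel (fun u _ => u.val = 0)

/-!
The function `f d = d * a ^ d` has strictly increasing increments when `a > 1`, so it lies
strictly below its chords: for `1 ≤ d ≤ m = n - 1`,
`(m - 1) * f d ≤ (m - d) * f 1 + (d - 1) * f m`, with equality only for `d ∈ {1, m}`.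
Summing over the vertices of a tree, whose degrees lie in `[1, m]` and add up to `2 * m`, the
right-hand sides add up to `(m - 1) * (f m + m * f 1)`, the value of the star. Equality forces
every degree to be `1` or `m`; a tree with a vertex of degree `n - 1` has all its `n - 1` edges
at that vertex, so it is a star.
-/

lemma mul_lt_chord_of_strictMono_sub {f : ℕ → ℝ} (hf : StrictMono fun j => f (j + 1) - f j)
    {i d m : ℕ} (hid : i < d) (hdm : d < m) :
    ((m : ℝ) - i) * f d < ((m : ℝ) - d) * f i + ((d : ℝ) - i) * f m := by
  have hleft : f d - f i < ((d : ℝ) - i) * (f (d + 1) - f d) := by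
    rw [← sum_Ico_sub f hid.le]
    calc ∑ j ∈ Ico i d, (f (j + 1) - f j) < ∑ _j ∈ Ico i d, (f (d + 1) - f d) :=
          sum_lt_sum_of_nonempty (nonempty_Ico.2 hid) fun j hj => hf (mem_Ico.1 hj).2
      _ = ((d : ℝ) - i) * (f (d + 1) - f d) := by
          rw [sum_const, Nat.card_Ico, nsmul_eq_mul, Nat.cast_sub hid.le]
  have hright : ((m : ℝ) - d) * (f (d + 1) - f d) ≤ f m - f d := by
    rw [← sum_Ico_sub f hdm.le]
    calc ((m : ℝ) - d) * (f (d + 1) - f d) = ∑ _j ∈ Ico d m, (f (d + 1) - f d) := by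
          rw [sum_const, Nat.card_Ico, nsmul_eq_mul, Nat.cast_sub hdm.le]
      _ ≤ ∑ j ∈ Ico d m, (f (j + 1) - f j) :=
          sum_le_sum fun j hj => hf.monotone (mem_Ico.1 hj).1
  have hmd : (0 : ℝ) < m - d := sub_pos.2 (by exact_mod_cast hdm)
  have hdi : (0 : ℝ) < d - i := sub_pos.2 (by exact_mod_cast hid)
  nlinarith [mul_lt_mul_of_pos_left hleft hmd, mul_le_mul_of_nonneg_left hright hdi.le]

lemma mul_le_chord_of_strictMono_sub {f : ℕ → ℝ} (hf : StrictMono fun j => f (j + 1) - f j)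
    {i d m : ℕ} (hid : i ≤ d) (hdm : d ≤ m) :
    ((m : ℝ) - i) * f d ≤ ((m : ℝ) - d) * f i + ((d : ℝ) - i) * f m := by
  rcases hid.eq_or_lt with rfl | hid
  · linarith
  rcases hdm.eq_or_lt with rfl | hdm
  · linarith
  exact (mul_lt_chord_of_strictMono_sub hf hid hdm).le

lemma mul_eq_chord_iff_of_strictMono_sub {f : ℕ → ℝ} (hf : StrictMono fun j => f (j + 1) - f j)
    {i d m : ℕ} (hid : i ≤ d) (hdm : d ≤ m) :
    ((m : ℝ) - i) * f d = ((m : ℝ) - d) * f i + ((d : ℝ) - i) * f m ↔ d = i ∨ d = m := by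
  refine ⟨fun heq => ?_, ?_⟩
  · by_contra! hne
    exact (mul_lt_chord_of_strictMono_sub hf (hid.lt_of_ne' hne.1) (hdm.lt_of_ne hne.2)).ne heq
  · rintro (rfl | rfl) <;> ring

noncomputable def exdeg (a : ℝ) (d : ℕ) : ℝ := d * a ^ d

lemma strictMono_exdeg_sub {a : ℝ} (ha : 1 < a) :
    StrictMono fun j => exdeg a (j + 1) - exdeg a j := by
  refine strictMono_nat_of_lt_succ fun j => ?_
  have hpos : 0 < a ^ j * ((a - 1) * ((j + 2) * a - j)) :=
    mul_pos (pow_pos (by linarith) j)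
      (mul_pos (sub_pos.2 ha) (by nlinarith [j.cast_nonneg (α := ℝ)]))
  simp only [exdeg, pow_succ]
  push_cast
  nlinarith [hpos]

theorem sum_le_star_of_strictMono_sub {ι : Type*} [Fintype ι] {f : ℕ → ℝ}
    (hf : StrictMono fun j => f (j + 1) - f j) {m : ℕ} (hm : 2 ≤ m)
    (hcard : Fintype.card ι = m + 1) {d : ι → ℕ} (hd1 : ∀ k, 1 ≤ d k) (hdm : ∀ k, d k ≤ m)
    (hsum : ∑ k, d k = 2 * m) :
    ∑ k, f (d k) ≤ f m + m * f 1 ∧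
      (∑ k, f (d k) = f m + m * f 1 ↔ ∀ k, d k = 1 ∨ d k = m) := by
  set chord : ι → ℝ := fun k => ((m : ℝ) - d k) * f 1 + ((d k : ℝ) - 1) * f m
  have hsumR : ∑ k, (d k : ℝ) = 2 * m := by exact_mod_cast hsum
  have hchord : ∑ k, chord k = ((m : ℝ) - 1) * (f m + m * f 1) := by
    simp only [chord, sub_mul, sum_add_distrib, sum_sub_distrib, ← sum_mul, sum_const, card_univ,
      hcard, hsumR, nsmul_eq_mul]
    push_cast
    ring
  have hle : ∀ k, ((m : ℝ) - 1) * f (d k) ≤ chord k := fun k => by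
    simpa using mul_le_chord_of_strictMono_sub hf (hd1 k) (hdm k)
  have hm1 : (0 : ℝ) < m - 1 := by
    have : (2 : ℝ) ≤ m := by exact_mod_cast hm
    linarith
  constructor
  · refine le_of_mul_le_mul_left ?_ hm1
    rw [mul_sum, ← hchord]
    exact sum_le_sum fun k _ => hle k
  · rw [← mul_right_inj' hm1.ne', mul_sum, ← hchord, sum_eq_sum_iff_of_le fun k _ => hle k]
    simpa using forall_congr' fun k => mul_eq_chord_iff_of_strictMono_sub hf (hd1 k) (hdm k)

namespace SimpleGraph

variable {V W : Type*}

def Iso.starGraph (e : V ≃ W) (r : V) : starGraph r ≃g starGraph (e r) where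
  toEquiv := e
  map_rel_iff' := by simp

variable [Fintype V] {T : SimpleGraph V} [DecidableRel T.Adj]

lemma IsTree.sum_degrees (hT : T.IsTree) : ∑ v, T.degree v = 2 * (Fintype.card V - 1) := by
  rw [sum_degrees_eq_twice_card_edges, ← hT.card_edgeFinset, Nat.add_sub_cancel]

variable [DecidableEq V]

lemma IsTree.eq_starGraph_of_degree_eq (hT : T.IsTree) {c : V}
    (hc : T.degree c = Fintype.card V - 1) : T = starGraph c := by
  have hedges : T.incidenceFinset c = T.edgeFinset := by
    refine eq_of_subset_of_card_le (T.incidenceFinset_subset c) ?_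
    rw [card_incidenceFinset_eq_degree, hc, ← hT.card_edgeFinset, Nat.add_sub_cancel]
  have hcenter : ∀ u v, T.Adj u v → u = c ∨ v = c := fun u v huv => by
    have : s(u, v) ∈ T.incidenceFinset c := hedges ▸ (mem_edgeFinset.2 huv)
    rw [mem_incidenceFinset, mk'_mem_incidenceSet_iff] at this
    exact this.2.imp Eq.symm Eq.symm
  ext u v
  refine ⟨fun huv => ⟨huv.ne, hcenter u v huv⟩, ?_⟩
  -- every vertex `u ≠ c` has some neighbour, which can only be `c`
  have hleaf : ∀ u, u ≠ c → T.Adj u c := fun u hu => by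
    have : Nontrivial V := ⟨⟨u, c, hu⟩⟩
    obtain ⟨w, huw⟩ := (T.degree_pos_iff_exists_adj u).1
      (hT.connected.preconnected.degree_pos_of_nontrivial u)
    obtain rfl := (hcenter u w huw).resolve_left hu
    exact huw
  rintro ⟨hne, rfl | rfl⟩
  · exact (hleaf v hne.symm).symm
  · exact hleaf u hne

lemma IsTree.nonempty_iso_starGraph_iff (hT : T.IsTree) (r : V) :
    Nonempty (T ≃g starGraph r) ↔ ∀ v, T.degree v = 1 ∨ T.degree v = Fintype.card V - 1 := by
  refine ⟨fun ⟨φ⟩ v => ?_, fun h => ?_⟩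
  · rw [← φ.degree_eq v]
    by_cases hv : φ v = r
    · rw [hv]
      exact .inr degree_starGraph_center
    · exact .inl (degree_starGraph_of_ne_center hv)
  obtain ⟨c, hc⟩ : ∃ c, T.degree c = Fintype.card V - 1 := by
    by_contra! hno
    have hleaf v : T.degree v = 1 := (h v).resolve_right (hno v)
    have hsum := hT.sum_degrees
    simp only [hleaf, sum_const, card_univ, smul_eq_mul, mul_one] at hsum
    obtain ⟨v⟩ := hT.connected.nonempty
    have := Fintype.card_pos_iff.2 ⟨v⟩
    exact hno v (by rw [hleaf v]; omega)
  rw [hT.eq_starGraph_of_degree_eq hc]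
  exact ⟨(Iso.starGraph (Equiv.swap c r) c).trans (by rw [Equiv.swap_apply_left])⟩

end SimpleGraph

lemma SEI_eq_sum_degree {n : ℕ} (G : SimpleGraph (Fin n)) [DecidableRel G.Adj] (a : ℝ) :
    SEI G a = ∑ v, exdeg a (G.degree v) := by
  simp only [SEI, exdeg, deg, Nat.card_eq_fintype_card, SimpleGraph.card_neighborSet_eq_degree]

lemma starGraph_eq_starGraph_zero (n : ℕ) [NeZero n] : starGraph n = SimpleGraph.starGraph 0 := by
  ext u v
  simp only [starGraph, SimpleGraph.starGraph, SimpleGraph.fromRel_adj, Fin.ext_iff, Fin.val_zero]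

theorem stmt12 (n : ℕ) (hn : 4 ≤ n) (T : SimpleGraph (Fin n)) (hT : T.IsTree) :
    ∀ a : ℝ, 1 < a →
      SEI T a ≤ ((n : ℝ) - 1) * a ^ (n - 1) + ((n : ℝ) - 1) * a ∧
      (SEI T a = ((n : ℝ) - 1) * a ^ (n - 1) + ((n : ℝ) - 1) * a ↔
        Nonempty (T ≃g starGraph n)) := by
  classical
  intro a ha
  have : NeZero n := ⟨by omega⟩
  have : Nontrivial (Fin n) := Fin.nontrivial_iff_two_le.2 (by omega)
  have hbound : exdeg a (n - 1) + ((n - 1 : ℕ) : ℝ) * exdeg a 1 =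
      ((n : ℝ) - 1) * a ^ (n - 1) + ((n : ℝ) - 1) * a := by
    simp [exdeg, Nat.cast_sub (by omega : 1 ≤ n)]
  rw [SEI_eq_sum_degree, ← hbound, starGraph_eq_starGraph_zero, hT.nonempty_iso_starGraph_iff]
  simpa using sum_le_star_of_strictMono_sub (strictMono_exdeg_sub ha) (m := n - 1) (by omega)
    (by simp; omega) (fun v => hT.connected.preconnected.degree_pos_of_nontrivial v)
    (fun v => by simpa using Nat.le_sub_one_of_lt (T.degree_lt_card_verts v))
    (by simpa using hT.sum_degrees)
end

section
/- If T is a tree on n ≥ 4 vertices, then R⁰_α(T) ≤ (n−1)^α + (n−1) for every real α with α < 0 or α > 1, and R⁰_α(T) ≥ (n−1)^α + (n−1) for every real α with 0 < α < 1; equality holds if and only if T is isomorphic to the star S_n (the tree with one vertex of degree n−1 and n−1 vertices of degree 1). -/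
/-!
The degrees of a tree on `n` vertices lie in `[1, n - 1]` and sum to `2 (n - 1)`. For `f` strictly
convex on `[1, n - 1]`, each `f d` lies below the chord through `(1, f 1)` and `(n - 1, f (n - 1))`,
strictly unless `d` is an endpoint. The chord is affine and the degree sum is fixed, so summing gives
`∑ f (d v) ≤ (n - 1) f 1 + f (n - 1)`, with equality iff every degree is `1` or `n - 1`, i.e. iff the
tree is a star: the `n - 1` edges at a vertex of degree `n - 1` are then all the edges.
Take `f x = x ^ α` for `α < 0` or `α > 1`, and `f x = -x ^ α` for `0 < α < 1`.
-/

open Finset Real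

theorem strictConvexOn_rpow_of_neg {p : ℝ} (hp : p < 0) :
    StrictConvexOn ℝ (Set.Ioi 0) fun x : ℝ ↦ x ^ p := by
  apply StrictMonoOn.strictConvexOn_of_deriv (convex_Ioi 0)
    fun x hx ↦ (continuousAt_rpow_const x p (Or.inl (ne_of_gt hx))).continuousWithinAt
  rw [interior_Ioi, deriv_rpow_const']
  intro x hx y _ hxy
  exact mul_lt_mul_of_neg_left (rpow_lt_rpow_of_neg hx hxy (by linarith)) hp

theorem ConvexOn.mul_le_chord {f : ℝ → ℝ} {a b x : ℝ} (hf : ConvexOn ℝ (Set.Icc a b) f)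
    (hx : x ∈ Set.Icc a b) : (b - a) * f x ≤ (b - x) * f a + (x - a) * f b := by
  have ha : a ∈ Set.Icc a b := ⟨le_rfl, hx.1.trans hx.2⟩
  have hb : b ∈ Set.Icc a b := ⟨hx.1.trans hx.2, le_rfl⟩
  rcases hx.1.eq_or_lt with rfl | hax
  · linarith
  rcases hx.2.eq_or_lt with rfl | hxb
  · linarith
  exact hf.secant_mono_aux1 ha hb hax hxb

theorem StrictConvexOn.mul_eq_chord_iff {f : ℝ → ℝ} {a b x : ℝ}
    (hf : StrictConvexOn ℝ (Set.Icc a b) f) (hx : x ∈ Set.Icc a b) :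
    (b - a) * f x = (b - x) * f a + (x - a) * f b ↔ x = a ∨ x = b := by
  refine ⟨fun heq ↦ ?_, by rintro (rfl | rfl) <;> ring⟩
  by_contra! hne
  have hax : a < x := lt_of_le_of_ne hx.1 hne.1.symm
  have hxb : x < b := lt_of_le_of_ne hx.2 hne.2
  exact (hf.secant_strict_mono_aux1 ⟨le_rfl, hx.1.trans hx.2⟩ ⟨hx.1.trans hx.2, le_rfl⟩ hax hxb).ne
    heq

section

variable {n : ℕ}

theorem SimpleGraph.deg_eq_degree (G : SimpleGraph (Fin n)) [DecidableRel G.Adj] (v : Fin n) :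
    deg G v = G.degree v := by
  rw [deg, Nat.card_eq_fintype_card, card_neighborSet_eq_degree]

theorem SimpleGraph.deg_le (G : SimpleGraph (Fin n)) (v : Fin n) : deg G v ≤ n - 1 := by
  classical
  have := G.degree_lt_card_verts v
  rw [Fintype.card_fin] at this
  rw [deg_eq_degree]
  omega

theorem SimpleGraph.Iso.deg_eq {G H : SimpleGraph (Fin n)} (φ : G ≃g H) (v : Fin n) :
    deg G v = deg H (φ v) :=
  Nat.card_congr (φ.mapNeighborSet v)

theorem SimpleGraph.IsTree.one_le_deg (hn : 2 ≤ n) {T : SimpleGraph (Fin n)} (hT : T.IsTree)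
    (v : Fin n) : 1 ≤ deg T v := by
  classical
  have : Nontrivial (Fin n) := Fin.nontrivial_iff_two_le.2 hn
  rw [deg_eq_degree]
  exact hT.connected.preconnected.degree_pos_of_nontrivial v

theorem SimpleGraph.IsTree.sum_deg {T : SimpleGraph (Fin n)} (hT : T.IsTree) :
    ∑ v, deg T v = 2 * (n - 1) := by
  classical
  have := hT.card_edgeFinset
  rw [Fintype.card_fin] at this
  simp only [deg_eq_degree, sum_degrees_eq_twice_card_edges]
  omega

theorem starGraph_adj (a b : Fin n) :
    (starGraph n).Adj a b ↔ a ≠ b ∧ (a.val = 0 ∨ b.val = 0) := by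
  simp [starGraph, SimpleGraph.fromRel_adj]

theorem deg_starGraph (w : Fin n) : deg (starGraph n) w = if w.val = 0 then n - 1 else 1 := by
  classical
  rw [SimpleGraph.deg_eq_degree, SimpleGraph.degree]
  split_ifs with hw
  · have : (starGraph n).neighborFinset w = univ.erase w := by
      ext u
      simp [starGraph_adj, hw, eq_comm]
    rw [this, card_erase_of_mem (mem_univ _), card_univ, Fintype.card_fin]
  · have : (starGraph n).neighborFinset w = {⟨0, w.pos⟩} := by
      ext u
      simp only [SimpleGraph.mem_neighborFinset, starGraph_adj, mem_singleton, Fin.ext_iff]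
      grind
    rw [this, card_singleton]

theorem nonempty_iso_starGraph_of_adj_iff {G : SimpleGraph (Fin n)} (c : Fin n)
    (hc : ∀ a b, G.Adj a b ↔ a ≠ b ∧ (a = c ∨ b = c)) : Nonempty (G ≃g starGraph n) := by
  let z : Fin n := ⟨0, c.pos⟩
  have hz : ∀ a, (Equiv.swap c z a).val = 0 ↔ a = c := by
    intro a
    rw [← Fin.ext_iff (b := z), Equiv.swap_apply_eq_iff, Equiv.swap_apply_right]
  refine ⟨⟨Equiv.swap c z, ?_⟩⟩
  intro a b
  rw [starGraph_adj, hc, hz, hz, (Equiv.swap c z).injective.ne_iff]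

theorem SimpleGraph.IsTree.adj_iff_of_deg_eq {T : SimpleGraph (Fin n)} (hT : T.IsTree) {c : Fin n}
    (hc : deg T c = n - 1) (a b : Fin n) : T.Adj a b ↔ a ≠ b ∧ (a = c ∨ b = c) := by
  classical
  have hnbr : T.neighborFinset c = univ.erase c := by
    refine eq_of_subset_of_card_le (fun v hv ↦ ?_) ?_
    · exact mem_erase.2 ⟨((mem_neighborFinset _ _ _).1 hv).ne', mem_univ v⟩
    · rw [card_neighborFinset_eq_degree, ← deg_eq_degree, hc, card_erase_of_mem (mem_univ c),
        card_univ, Fintype.card_fin]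
  have hinc : T.incidenceFinset c = T.edgeFinset := by
    refine eq_of_subset_of_card_le (T.incidenceFinset_subset c) ?_
    have := hT.card_edgeFinset
    rw [Fintype.card_fin] at this
    rw [card_incidenceFinset_eq_degree, ← deg_eq_degree, hc]
    omega
  constructor
  · intro h
    have : s(a, b) ∈ T.incidenceFinset c := hinc ▸ mem_edgeFinset.2 h
    rw [mem_incidenceFinset, incidenceSet, Set.mem_ofPred_eq, Sym2.mem_iff] at this
    exact ⟨h.ne, this.2.imp Eq.symm Eq.symm⟩
  · rintro ⟨hab, rfl | rfl⟩
    · rw [← mem_neighborFinset, hnbr]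
      exact mem_erase.2 ⟨hab.symm, mem_univ b⟩
    · rw [adj_comm, ← mem_neighborFinset, hnbr]
      exact mem_erase.2 ⟨hab, mem_univ a⟩

theorem nonempty_iso_starGraph_iff_of_isTree {T : SimpleGraph (Fin n)} (hT : T.IsTree) :
    Nonempty (T ≃g starGraph n) ↔ ∀ v, deg T v = 1 ∨ deg T v = n - 1 := by
  constructor
  · rintro ⟨φ⟩ v
    rw [φ.deg_eq, deg_starGraph]
    split_ifs
    · exact Or.inr rfl
    · exact Or.inl rfl
  · intro h
    obtain ⟨c, hc⟩ : ∃ c, deg T c = n - 1 := by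
      obtain ⟨v⟩ := hT.connected.nonempty
      by_contra! hne
      have hleaf (w : Fin n) : deg T w = 1 := (h w).resolve_right (hne w)
      have hsum := hT.sum_deg
      simp only [hleaf, sum_const, card_univ, Fintype.card_fin, smul_eq_mul, mul_one] at hsum
      exact hne v (by have := v.pos; rw [hleaf v]; omega)
    exact nonempty_iso_starGraph_of_adj_iff c (hT.adj_iff_of_deg_eq hc)

theorem sum_deg_le_of_strictConvexOn (hn : 3 ≤ n) {T : SimpleGraph (Fin n)} (hT : T.IsTree)
    {f : ℝ → ℝ} (hf : StrictConvexOn ℝ (Set.Icc 1 ((n : ℝ) - 1)) f) :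
    ∑ v, f (deg T v) ≤ ((n : ℝ) - 1) * f 1 + f ((n : ℝ) - 1) ∧
    (∑ v, f (deg T v) = ((n : ℝ) - 1) * f 1 + f ((n : ℝ) - 1) ↔
      Nonempty (T ≃g starGraph n)) := by
  set N : ℝ := (n : ℝ) - 1 with hNdef
  have hcastN : ((n - 1 : ℕ) : ℝ) = N := by rw [Nat.cast_sub (by omega), Nat.cast_one]
  have hN : 1 < N := by
    rw [← hcastN, Nat.one_lt_cast]
    omega
  have hdeg (v : Fin n) : (deg T v : ℝ) ∈ Set.Icc 1 N := by
    rw [← hcastN]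
    exact ⟨mod_cast hT.one_le_deg (by omega) v, mod_cast T.deg_le v⟩
  have hsum : ∑ v, (deg T v : ℝ) = 2 * N := by
    rw [← hcastN]
    exact_mod_cast hT.sum_deg
  have hchord : ∑ v, ((N - deg T v) * f 1 + ((deg T v : ℝ) - 1) * f N) =
      (N - 1) * (N * f 1 + f N) := by
    simp only [sum_add_distrib, ← sum_mul, sum_sub_distrib, hsum, sum_const, card_univ,
      Fintype.card_fin, nsmul_eq_mul, mul_one]
    rw [hNdef]
    ring
  have hle (v : Fin n) := hf.convexOn.mul_le_chord (hdeg v)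
  have hpos : 0 < N - 1 := by linarith
  rw [nonempty_iso_starGraph_iff_of_isTree hT]
  constructor
  · refine le_of_mul_le_mul_left ?_ hpos
    rw [mul_sum, ← hchord]
    exact sum_le_sum fun v _ ↦ hle v
  · rw [← mul_right_inj' hpos.ne', mul_sum, ← hchord, sum_eq_sum_iff_of_le fun v _ ↦ hle v]
    simp only [mem_univ, true_imp_iff]
    refine forall_congr' fun v ↦ (hf.mul_eq_chord_iff (hdeg v)).trans ?_
    rw [← hcastN]
    norm_cast

end

theorem stmt13 (n : ℕ) (hn : 4 ≤ n) (T : SimpleGraph (Fin n)) (hT : T.IsTree) :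
    (∀ α : ℝ, (α < 0 ∨ 1 < α) →
      R0 T α ≤ ((n : ℝ) - 1) ^ α + ((n : ℝ) - 1) ∧
      (R0 T α = ((n : ℝ) - 1) ^ α + ((n : ℝ) - 1) ↔ Nonempty (T ≃g starGraph n))) ∧
    (∀ α : ℝ, 0 < α → α < 1 →
      R0 T α ≥ ((n : ℝ) - 1) ^ α + ((n : ℝ) - 1) ∧
      (R0 T α = ((n : ℝ) - 1) ^ α + ((n : ℝ) - 1) ↔ Nonempty (T ≃g starGraph n))) := by
  have hIcc : Set.Icc (1 : ℝ) ((n : ℝ) - 1) ⊆ Set.Ioi 0 := fun x hx ↦ one_pos.trans_le hx.1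
  have hIcc' := hIcc.trans Set.Ioi_subset_Ici_self
  refine ⟨fun α hα ↦ ?_, fun α hα₀ hα₁ ↦ ?_⟩
  · have hf : StrictConvexOn ℝ (Set.Icc 1 ((n : ℝ) - 1)) (· ^ α) := by
      rcases hα with hα | hα
      · exact (strictConvexOn_rpow_of_neg hα).subset hIcc (convex_Icc _ _)
      · exact (strictConvexOn_rpow hα).subset hIcc' (convex_Icc _ _)
    obtain ⟨hle, heq⟩ := sum_deg_le_of_strictConvexOn (by omega) hT hf
    simp only [one_rpow, mul_one] at hle heq
    rw [R0, add_comm]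
    exact ⟨hle, heq⟩
  · have hf := ((strictConcaveOn_rpow hα₀ hα₁).subset hIcc' (convex_Icc _ _)).neg
    obtain ⟨hle, heq⟩ := sum_deg_le_of_strictConvexOn (by omega) hT hf
    simp only [Pi.neg_apply, one_rpow, sum_neg_distrib, mul_neg, mul_one, ← neg_add,
      neg_le_neg_iff, neg_inj] at hle heq
    rw [R0, add_comm]
    exact ⟨hle, heq⟩
end

section
/- If T is a tree on n vertices that is not a caterpillar, then there exists a caterpillar T' on n vertices having the same degree sequence as T. -/
/-!
Put the `k` vertices of degree `≠ 1` on a path, in any order, and hang the leaves on them, giving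
the `i`-th spine vertex as many leaves as its degree exceeds its degree in the path. The degrees of
a tree on `n` vertices sum to `2(n - 1)`, which is exactly what makes the number of leaves come
out right; the resulting graph is connected with `n - 1` edges, hence a tree, and by construction
its vertices of degree `≠ 1` induce the path. A tree with at most one vertex of degree `≠ 1` is
already a caterpillar.
-/

open Finset Real

/-- A caterpillar is a tree which becomes a path graph upon deleting all
pendent vertices (and their incident edges). -/
noncomputable def IsCaterpillar {n : ℕ} (G : SimpleGraph (Fin n)) : Prop :=
  G.IsTree ∧
    ∃ m : ℕ, Nonempty ((G.induce {v | deg G v ≠ 1}) ≃g SimpleGraph.pathGraph m)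

namespace SimpleGraph

variable {V W L : Type*}

lemma sum_card_neighborSet [Fintype V] (G : SimpleGraph V) :
    ∑ v, Nat.card (G.neighborSet v) = 2 * Nat.card G.edgeSet := by
  classical
  simp only [Nat.card_eq_fintype_card, card_neighborSet_eq_degree,
    sum_degrees_eq_twice_card_edges, edgeFinset_card]

lemma isTree_iff_connected_and_sum_card_neighborSet [Fintype V] (G : SimpleGraph V) :
    G.IsTree ↔ G.Connected ∧ ∑ v, Nat.card (G.neighborSet v) + 2 = 2 * Fintype.card V := by
  rw [isTree_iff_connected_and_card, sum_card_neighborSet, Nat.card_eq_fintype_card (α := V)]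
  constructor <;> rintro ⟨h, h'⟩ <;> exact ⟨h, by omega⟩

lemma Preconnected.card_neighborSet_pos [Finite V] [Nontrivial V] {G : SimpleGraph V}
    (h : G.Preconnected) (v : V) : 0 < Nat.card (G.neighborSet v) := by
  have := Fintype.ofFinite V
  classical
  rw [Nat.card_eq_fintype_card, card_neighborSet_eq_degree]
  exact h.degree_pos_of_nontrivial v

lemma nonempty_iso_of_subsingleton [Subsingleton V] (G : SimpleGraph V) (H : SimpleGraph W)
    (e : V ≃ W) : Nonempty (G ≃g H) :=
  ⟨⟨e, fun {a b} => by simp [Subsingleton.elim a b]⟩⟩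

section pathGraph

variable {k : ℕ}

lemma ncard_neighborSet_pathGraph_add (i : Fin (k + 1)) :
    ((pathGraph (k + 1)).neighborSet i).ncard + (if i = 0 then 1 else 0)
      + (if i = Fin.last k then 1 else 0) = 2 := by
  have hnb : (pathGraph (k + 1)).neighborSet i
      = {j | j.val = i.val + 1} ∪ {j | j.val + 1 = i.val} := by
    ext j
    simp only [mem_neighborSet, pathGraph_adj, Set.mem_union, Set.mem_ofPred_eq]
    omega
  have hsucc : {j : Fin (k + 1) | j.val = i.val + 1}.ncard = if i.val = k then 0 else 1 := by
    split_ifs with h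
    · refine (Set.ncard_eq_zero).mpr (Set.eq_empty_of_forall_notMem fun j hj => ?_)
      have := j.isLt
      rw [Set.mem_ofPred_eq] at hj
      omega
    · exact Set.ncard_eq_one.mpr ⟨⟨i.val + 1, by omega⟩, by ext j; simp [Fin.ext_iff]⟩
  have hpred : {j : Fin (k + 1) | j.val + 1 = i.val}.ncard = if i.val = 0 then 0 else 1 := by
    split_ifs with h
    · refine (Set.ncard_eq_zero).mpr (Set.eq_empty_of_forall_notMem fun j hj => ?_)
      rw [Set.mem_ofPred_eq] at hj
      omega
    · exact Set.ncard_eq_one.mpr ⟨⟨i.val - 1, by omega⟩, by ext j; simp [Fin.ext_iff]; omega⟩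
  have hdisj : Disjoint {j : Fin (k + 1) | j.val = i.val + 1} {j | j.val + 1 = i.val} :=
    Set.disjoint_left.mpr fun j h h' => by rw [Set.mem_ofPred_eq] at h h'; omega
  rw [hnb, Set.ncard_union_eq hdisj, hsucc, hpred]
  simp only [Fin.ext_iff, Fin.val_zero, Fin.val_last]
  split_ifs <;> omega

lemma ncard_neighborSet_pathGraph_le (i : Fin (k + 1)) :
    ((pathGraph (k + 1)).neighborSet i).ncard ≤ 2 := by
  have := ncard_neighborSet_pathGraph_add i
  omega

lemma sum_ncard_neighborSet_pathGraph :
    ∑ i : Fin (k + 1), ((pathGraph (k + 1)).neighborSet i).ncard = 2 * k := by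
  have := Fintype.sum_congr _ (fun _ => 2) (ncard_neighborSet_pathGraph_add (k := k))
  simp only [Finset.sum_add_distrib, Finset.sum_ite_eq', Finset.mem_univ, if_true,
    Finset.sum_const, Finset.card_univ, Fintype.card_fin, smul_eq_mul] at this
  omega

end pathGraph

def caterpillar (k : ℕ) (a : L → Fin k) : SimpleGraph (Fin k ⊕ L) where
  Adj
    | .inl i, .inl j => (pathGraph k).Adj i j
    | .inl i, .inr l => a l = i
    | .inr l, .inl i => a l = i
    | .inr _, .inr _ => False
  symm := ⟨by
    rintro (i | l) (j | m) h
    exacts [h.symm, h, h, h]⟩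
  loopless := ⟨by
    rintro (i | l) h
    exacts [(pathGraph k).loopless.irrefl i h, h]⟩

section caterpillar

variable {k : ℕ} (a : L → Fin k)

lemma card_neighborSet_caterpillar_inl [Finite L] (i : Fin k) :
    Nat.card ((caterpillar k a).neighborSet (.inl i))
      = Nat.card ((pathGraph k).neighborSet i) + Nat.card {l // a l = i} := by
  rw [← Nat.card_sum]
  exact Nat.card_congr Equiv.subtypeSum

lemma card_neighborSet_caterpillar_inr (l : L) :
    Nat.card ((caterpillar k a).neighborSet (.inr l)) = 1 := by
  have : (caterpillar k a).neighborSet (.inr l) = {.inl (a l)} := by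
    ext (i | m) <;> simp [neighborSet, caterpillar, eq_comm]
  rw [this, Nat.card_unique]

lemma caterpillar_preconnected : (caterpillar k a).Preconnected := by
  have spine (i j : Fin k) : (caterpillar k a).Reachable (.inl i) (.inl j) :=
    (pathGraph_preconnected k i j).map ⟨Sum.inl, id⟩
  have toSpine : ∀ x, ∃ i, (caterpillar k a).Reachable x (.inl i)
    | .inl i => ⟨i, .rfl⟩
    | .inr l => ⟨a l, Adj.reachable (show a l = a l from rfl)⟩
  intro x y
  obtain ⟨i, hi⟩ := toSpine x
  obtain ⟨j, hj⟩ := toSpine y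
  exact hi.trans ((spine i j).trans hj.symm)

end caterpillar

end SimpleGraph

open SimpleGraph

lemma exists_card_fiber_eq {L : Type*} [Fintype L] {k : ℕ} (c : Fin k → ℕ)
    (h : ∑ i, c i = Fintype.card L) : ∃ a : L → Fin k, ∀ i, Nat.card {l // a l = i} = c i := by
  let e : L ≃ Σ i, Fin (c i) := (Fintype.equivFinOfCardEq h.symm).trans finSigmaFinEquiv.symm
  refine ⟨fun l => (e l).1, fun i => ?_⟩
  rw [Nat.card_congr ((e.subtypeEquiv (q := fun s => s.1 = i) fun _ => Iff.rfl).trans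
    (Equiv.sigmaSubtype i)), Nat.card_fin]

theorem exists_caterpillar_of_degrees {V : Type*} [Fintype V] (d : V → ℕ)
    (hpos : ∀ v, 0 < d v) (hspine : ∃ v, d v ≠ 1)
    (hsum : ∑ v, d v + 2 = 2 * Fintype.card V) :
    ∃ G : SimpleGraph V, G.IsTree ∧ (∀ v, Nat.card (G.neighborSet v) = d v) ∧
      ∃ m, Nonempty (G.induce {v | d v ≠ 1} ≃g pathGraph m) := by
  classical
  obtain ⟨k, hk⟩ : ∃ k, Fintype.card {v // d v ≠ 1} = k + 1 := by
    obtain ⟨v, hv⟩ := hspine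
    have : Nonempty {v // d v ≠ 1} := ⟨⟨v, hv⟩⟩
    exact Nat.exists_eq_succ_of_ne_zero Fintype.card_ne_zero
  let σ : {v // d v ≠ 1} ≃ Fin (k + 1) := Fintype.equivFinOfCardEq hk
  have hpath_le (i : Fin (k + 1)) : ((pathGraph (k + 1)).neighborSet i).ncard ≤ d (σ.symm i) := by
    have := ncard_neighborSet_pathGraph_le i
    have := hpos (σ.symm i)
    have := (σ.symm i).2
    omega
  have hleaves : ∑ i, (d (σ.symm i) - ((pathGraph (k + 1)).neighborSet i).ncard)
      = Fintype.card {v // ¬ d v ≠ 1} := by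
    rw [Finset.sum_tsub_distrib _ fun i _ => hpath_le i, sum_ncard_neighborSet_pathGraph,
      Equiv.sum_comp σ.symm (fun v => d v)]
    have hsumL : ∑ v : {v // ¬ d v ≠ 1}, d v = Fintype.card {v // ¬ d v ≠ 1} := by
      simp [fun v : {v // ¬ d v ≠ 1} => not_not.mp v.2]
    rw [← Fintype.sum_subtype_add_sum_subtype (fun v => d v ≠ 1), hsumL] at hsum
    have := Fintype.card_subtype_compl (fun v => d v ≠ 1)
    have := Fintype.card_subtype_le (fun v => d v ≠ 1)
    omega
  obtain ⟨a, ha⟩ := exists_card_fiber_eq _ hleaves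
  let φ : Fin (k + 1) ⊕ {v // ¬ d v ≠ 1} ≃ V :=
    (Equiv.sumCongr σ.symm (Equiv.refl _)).trans (Equiv.sumCompl fun v => d v ≠ 1)
  have hC : ∀ x, Nat.card ((caterpillar (k + 1) a).neighborSet x) = d (φ x)
    | .inl i => by
      rw [card_neighborSet_caterpillar_inl, ha, Nat.card_coe_set_eq]
      have := hpath_le i
      simp only [φ, Equiv.trans_apply, Equiv.sumCongr_apply, Sum.map_inl, Equiv.sumCompl_apply_inl]
      omega
    | .inr l => by
      rw [card_neighborSet_caterpillar_inr]
      exact (not_not.mp l.2).symm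
  let G := (caterpillar (k + 1) a).comap φ.symm
  let ι : G ≃g caterpillar (k + 1) a := ⟨φ.symm, Iff.rfl⟩
  have hdeg (v : V) : Nat.card (G.neighborSet v) = d v := by
    rw [Nat.card_congr (ι.mapNeighborSet v), hC]
    exact congrArg d (φ.apply_symm_apply v)
  have hφ (s : {v // d v ≠ 1}) : φ.symm s = .inl (σ s) := φ.symm_apply_eq.mpr (by simp [φ])
  refine ⟨G, (isTree_iff_connected_and_sum_card_neighborSet G).mpr ⟨?_, ?_⟩, hdeg, k + 1,
    ⟨⟨σ, ?_⟩⟩⟩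
  · exact ι.connected_iff.mpr ⟨caterpillar_preconnected a⟩
  · simpa only [hdeg] using hsum
  · intro x y
    change _ ↔ (caterpillar (k + 1) a).Adj (φ.symm x) (φ.symm y)
    rw [hφ, hφ]
    rfl

theorem stmt15_general (n : ℕ) (T : SimpleGraph (Fin n)) (hT : T.IsTree) :
    ∃ T' : SimpleGraph (Fin n), IsCaterpillar T' ∧
      ∀ d : ℕ, countDeg T' d = countDeg T d := by
  rcases subsingleton_or_nontrivial ({v | deg T v ≠ 1} : Set (Fin n)) with hS | hS
  · exact ⟨T, ⟨hT, _, nonempty_iso_of_subsingleton _ _ (Finite.equivFin _)⟩, fun _ => rfl⟩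
  obtain ⟨⟨u, hu⟩, ⟨v, _⟩, huv⟩ := exists_pair_ne ({v | deg T v ≠ 1} : Set (Fin n))
  have : Nontrivial (Fin n) := ⟨u, v, fun h => huv (Subtype.ext h)⟩
  obtain ⟨G, hG, hdeg, hspine⟩ := exists_caterpillar_of_degrees (deg T)
    hT.connected.preconnected.card_neighborSet_pos ⟨u, hu⟩
    ((isTree_iff_connected_and_sum_card_neighborSet T).mp hT).2
  have hGT : deg G = deg T := funext hdeg
  refine ⟨G, ⟨hG, ?_⟩, fun d => ?_⟩
  · rwa [hGT]
  · simp only [countDeg, hGT]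

theorem stmt15 (n : ℕ) (T : SimpleGraph (Fin n)) (hT : T.IsTree)
    (hnc : ¬ IsCaterpillar T) :
    ∃ T' : SimpleGraph (Fin n), IsCaterpillar T' ∧
      ∀ d : ℕ, countDeg T' d = countDeg T d :=
  stmt15_general n T hT
end

section
/- Let n ≥ 6 and 3 ≤ k ≤ n−2, and let T be a tree on n vertices with exactly k segments (equivalently, with exactly n − k − 1 vertices of degree 2). If T has two or more vertices of degree 4, then there exists a tree T' on n vertices with exactly k segments such that: (i) R⁰_α(T) > R⁰_α(T') for every real α with α < 0 or α > 1; (ii) R⁰_α(T) < R⁰_α(T') for every real α with 0 < α < 1; (iii) SEI_a(T) > SEI_a(T') for every real a > 1; and (iv) SEI_a(T) < SEI_a(T') for every real a with (1+√33)/16 < a < 1. -/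
open Finset Real

/-!
Let `u`, `v` be two vertices of degree 4 and `w` a leaf. Moving one edge at `u` and then one at `v`
over to `w`, each time an edge `ux` whose removal keeps `u` connected to `w` (so that `ux` being a
bridge makes `(T - ux) + wx` a tree again), turns the degrees `(4, 4, 1)` into `(3, 3, 3)` and
changes no other degree; in particular the number of degree-2 vertices, i.e. of segments, is kept.
A degree-additive index then drops by `2φ(4) + φ(1) - 3φ(3)`. For `φ(d) = d^α` this is
`3^α (g(α) - 3)` with `g(α) = 2 (4/3)^α + (1/3)^α` strictly convex and `g(0) = g(1) = 3`; for
`φ(d) = d a^d` it is `a (a - 1) (8a² - a - 1)`, and `(1 + √33)/16` is the positive root of the last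
factor.
-/

lemma strictConvexOn_rpow_left {b : ℝ} (hb₀ : 0 < b) (hb₁ : b ≠ 1) :
    StrictConvexOn ℝ Set.univ fun x : ℝ ↦ b ^ x := by
  refine ⟨convex_univ, fun x _ y _ hxy s t hs ht hst ↦ ?_⟩
  have hlog : log b ≠ 0 := Real.log_ne_zero_of_pos_of_ne_one hb₀ hb₁
  have := strictConvexOn_exp.2 (Set.mem_univ (log b * x)) (Set.mem_univ (log b * y))
    (by simpa [hlog] using hxy) hs ht hst
  simp only [smul_eq_mul, rpow_def_of_pos hb₀] at this ⊢
  convert this using 2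
  ring

namespace StrictConvexOn

variable {f : ℝ → ℝ} {a b x : ℝ}

lemma apply_lt_of_mem_Ioo (hf : StrictConvexOn ℝ Set.univ f) (hfab : f a = f b)
    (hx : x ∈ Set.Ioo a b) : f x < f a := by
  have := hf.lt_on_openSegment (Set.mem_univ a) (Set.mem_univ b) (hx.1.trans hx.2).ne
    (by rwa [openSegment_eq_Ioo (hx.1.trans hx.2)])
  rwa [← hfab, max_self] at this

lemma lt_apply_of_lt_or_lt (hf : StrictConvexOn ℝ Set.univ f) (hab : a < b) (hfab : f a = f b)
    (hx : x < a ∨ b < x) : f a < f x := by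
  rcases hx with hx | hx
  · have := hf.lt_on_openSegment (Set.mem_univ x) (Set.mem_univ b) (hx.trans hab).ne
      (by rw [openSegment_eq_Ioo (hx.trans hab)]; exact ⟨hx, hab⟩)
    rw [← hfab] at this
    exact (lt_max_iff.1 this).resolve_right (lt_irrefl _)
  · have := hf.lt_on_openSegment (Set.mem_univ a) (Set.mem_univ x) (hab.trans hx).ne
      (by rw [openSegment_eq_Ioo (hab.trans hx)]; exact ⟨hab, hx⟩)
    rw [← hfab] at this
    exact (lt_max_iff.1 this).resolve_left (lt_irrefl _)

end StrictConvexOn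

lemma strictConvexOn_two_mul_rpow_add_rpow :
    StrictConvexOn ℝ Set.univ fun α : ℝ ↦ 2 * (4 / 3 : ℝ) ^ α + (1 / 3 : ℝ) ^ α := by
  have h₄ := strictConvexOn_rpow_left (b := 4 / 3) (by norm_num) (by norm_num)
  have h₁ := strictConvexOn_rpow_left (b := 1 / 3) (by norm_num) (by norm_num)
  have hsum : (fun α : ℝ ↦ 2 * (4 / 3 : ℝ) ^ α + (1 / 3 : ℝ) ^ α) =
      (fun α : ℝ ↦ (4 / 3 : ℝ) ^ α) + (fun α : ℝ ↦ (4 / 3 : ℝ) ^ α) +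
        fun α : ℝ ↦ (1 / 3 : ℝ) ^ α := by
    ext α
    simp only [Pi.add_apply]
    ring
  rw [hsum]
  exact (h₄.add h₄).add h₁

lemma two_mul_rpow_add_rpow_mul (α : ℝ) :
    (2 * (4 / 3 : ℝ) ^ α + (1 / 3 : ℝ) ^ α) * (3 : ℝ) ^ α = 2 * (4 : ℝ) ^ α + 1 := by
  rw [div_rpow (by norm_num) (by norm_num), div_rpow (by norm_num) (by norm_num), one_rpow]
  have : (3 : ℝ) ^ α ≠ 0 := (rpow_pos_of_pos (by norm_num) α).ne'
  field_simp

lemma three_mul_three_rpow_lt {α : ℝ} (hα : α < 0 ∨ 1 < α) :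
    3 * (3 : ℝ) ^ α < 2 * (4 : ℝ) ^ α + 1 := by
  have := strictConvexOn_two_mul_rpow_add_rpow.lt_apply_of_lt_or_lt zero_lt_one
    (by norm_num) hα
  rw [← two_mul_rpow_add_rpow_mul]
  exact mul_lt_mul_of_pos_right (by norm_num at this ⊢; linarith) (rpow_pos_of_pos (by norm_num) α)

lemma two_mul_four_rpow_add_one_lt {α : ℝ} (h₀ : 0 < α) (h₁ : α < 1) :
    2 * (4 : ℝ) ^ α + 1 < 3 * (3 : ℝ) ^ α := by
  have := strictConvexOn_two_mul_rpow_add_rpow.apply_lt_of_mem_Ioo (a := 0) (b := 1)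
    (by norm_num) ⟨h₀, h₁⟩
  rw [← two_mul_rpow_add_rpow_mul]
  exact mul_lt_mul_of_pos_right (by norm_num at this ⊢; linarith) (rpow_pos_of_pos (by norm_num) α)

namespace SimpleGraph

variable {V : Type*} {G H : SimpleGraph V}

lemma Reachable.of_forall_adj (h : ∀ a b, G.Adj a b → H.Reachable a b) {u v : V}
    (huv : G.Reachable u v) : H.Reachable u v := by
  simp only [reachable_iff_reflTransGen] at h huv ⊢
  exact huv.lift' id h

lemma Reachable.exists_forall_adj_ne_reachable_deleteEdges {u w : V} (h : G.Reachable u w)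
    (huw : u ≠ w) :
    ∃ z, ∀ x, G.Adj u x → x ≠ z → (G.deleteEdges {s(u, x)}).Reachable u w := by
  obtain ⟨p, hp⟩ := h.exists_isPath
  cases p with
  | nil => exact absurd rfl huw
  | @cons _ z _ huz r =>
    have hur : u ∉ r.support := ((Walk.cons_isPath_iff huz r).1 hp).2
    refine ⟨z, fun x hux hxz ↦ ⟨(Walk.cons huz r).toDeleteEdge s(u, x) ?_⟩⟩
    rw [Walk.edges_cons, List.mem_cons, not_or, Sym2.eq_iff]
    exact ⟨by rintro (⟨-, rfl⟩ | ⟨rfl, -⟩) <;> simp_all,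
      fun h ↦ hur (r.fst_mem_support_of_mem_edges h)⟩

def moveEdge (G : SimpleGraph V) (u x w : V) : SimpleGraph V :=
  G.deleteEdges {s(u, x)} ⊔ edge w x

lemma moveEdge_adj {u x w a b : V} :
    (G.moveEdge u x w).Adj a b ↔ G.Adj a b ∧ s(a, b) ≠ s(u, x) ∨ s(a, b) = s(w, x) ∧ a ≠ b := by
  simp [moveEdge, edge_adj]

lemma IsAcyclic.not_reachable_deleteEdges {u x : V} (hG : G.IsAcyclic) (hux : G.Adj u x) :
    ¬(G.deleteEdges {s(u, x)}).Reachable u x :=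
  isBridge_iff.1 (isAcyclic_iff_forall_adj_isBridge.1 hG hux)

lemma IsTree.moveEdge {u x w : V} (hG : G.IsTree) (hux : G.Adj u x)
    (hreach : (G.deleteEdges {s(u, x)}).Reachable u w) : (G.moveEdge u x w).IsTree := by
  have hwx : ¬(G.deleteEdges {s(u, x)}).Reachable w x := fun h ↦
    hG.isAcyclic.not_reachable_deleteEdges hux (hreach.trans h)
  refine ⟨(connected_iff _).2 ⟨fun a b ↦ (hG.connected.preconnected a b).of_forall_adj ?_,
    hG.connected.nonempty⟩, (hG.isAcyclic.anti (deleteEdges_le _)).sup_edge_of_not_reachable hwx⟩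
  intro a b hab
  by_cases he : s(a, b) = s(u, x)
  · have hux'' : (G.moveEdge u x w).Reachable u x :=
      (hreach.mono le_sup_left).trans (Adj.reachable (Or.inr ((edge_adj ..).2
        ⟨Or.inl ⟨rfl, rfl⟩, fun h ↦ hwx (h ▸ .rfl)⟩)))
    rcases Sym2.eq_iff.1 he with ⟨rfl, rfl⟩ | ⟨rfl, rfl⟩
    · exact hux''
    · exact hux''.symm
  · exact Adj.reachable (moveEdge_adj.2 (Or.inl ⟨hab, he⟩))

lemma neighborSet_moveEdge_left {u x w : V} (hux : G.Adj u x) (huw : u ≠ w) :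
    (G.moveEdge u x w).neighborSet u = G.neighborSet u \ {x} := by
  ext b
  simp only [mem_neighborSet, moveEdge_adj, Set.mem_sdiff, Set.mem_singleton_iff, Sym2.eq_iff]
  grind [Adj.ne]

lemma neighborSet_moveEdge_right {u x w : V} (huw : u ≠ w) (hwx : w ≠ x) :
    (G.moveEdge u x w).neighborSet w = insert x (G.neighborSet w) := by
  ext b
  simp only [mem_neighborSet, moveEdge_adj, Set.mem_insert_iff, Sym2.eq_iff]
  grind [Adj.ne]

lemma neighborSet_moveEdge_pivot {u x w : V} (hux : G.Adj u x) (hwx : w ≠ x) :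
    (G.moveEdge u x w).neighborSet x = insert w (G.neighborSet x \ {u}) := by
  ext b
  simp only [mem_neighborSet, moveEdge_adj, Set.mem_insert_iff, Set.mem_sdiff,
    Set.mem_singleton_iff, Sym2.eq_iff]
  grind [Adj.ne, Adj.symm]

lemma neighborSet_moveEdge_of_ne {u x w a : V} (hau : a ≠ u) (haw : a ≠ w) (hax : a ≠ x) :
    (G.moveEdge u x w).neighborSet a = G.neighborSet a := by
  ext b
  simp only [mem_neighborSet, moveEdge_adj, Sym2.eq_iff]
  grind [Adj.ne]

lemma IsTree.exists_isTree_transfer_degree [Finite V] {u w : V} (hG : G.IsTree) (huw : u ≠ w)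
    (hu : 2 ≤ (G.neighborSet u).ncard) :
    ∃ G' : SimpleGraph V, G'.IsTree ∧
      (G'.neighborSet u).ncard + 1 = (G.neighborSet u).ncard ∧
      (G'.neighborSet w).ncard = (G.neighborSet w).ncard + 1 ∧
      ∀ a, a ≠ u → a ≠ w → (G'.neighborSet a).ncard = (G.neighborSet a).ncard := by
  obtain ⟨z, hz⟩ := (hG.connected.preconnected u w).exists_forall_adj_ne_reachable_deleteEdges huw
  obtain ⟨x, hux : G.Adj u x, hxz⟩ := Set.exists_ne_of_one_lt_ncard hu z
  have hreach := hz x hux hxz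
  have hxw : ¬(G.deleteEdges {s(u, x)}).Reachable x w := fun h ↦
    hG.isAcyclic.not_reachable_deleteEdges hux (hreach.trans h.symm)
  have hwx : w ≠ x := fun h ↦ hxw (h ▸ .rfl)
  have hnwx : ¬G.Adj w x := fun h ↦ hxw <| Adj.reachable <| deleteEdges_adj.2
    ⟨h.symm, by simp [hux.ne.symm, huw.symm]⟩
  refine ⟨G.moveEdge u x w, hG.moveEdge hux hreach, ?_, ?_, fun a hau haw ↦ ?_⟩
  · rw [neighborSet_moveEdge_left hux huw,
      Set.ncard_sdiff_singleton_add_one (s := G.neighborSet u) hux]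
  · rw [neighborSet_moveEdge_right huw hwx,
      Set.ncard_insert_of_notMem (s := G.neighborSet w) hnwx]
  · obtain rfl | hax := eq_or_ne a x
    · rw [neighborSet_moveEdge_pivot hux hwx,
        Set.ncard_insert_of_notMem fun h ↦ hnwx (h.1 : G.Adj a w).symm,
        Set.ncard_sdiff_singleton_add_one (s := G.neighborSet a) hux.symm]
    · rw [neighborSet_moveEdge_of_ne hau haw hax]

end SimpleGraph

lemma sum_sub_sum_eq_of_eq_off_three {ι : Type*} [Fintype ι] [DecidableEq ι]
    {f g : ι → ℝ} {u v w : ι} (huv : u ≠ v) (huw : u ≠ w) (hvw : v ≠ w)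
    (h : ∀ a, a ≠ u → a ≠ v → a ≠ w → f a = g a) :
    ∑ a, f a - ∑ a, g a = f u + f v + f w - (g u + g v + g w) := by
  rw [← sum_sub_distrib, ← sum_subset (subset_univ {u, v, w}) fun a _ ha ↦ ?_]
  · rw [sum_insert (by simp [huv, huw]), sum_insert (by simp [hvw]), sum_singleton]
    ring
  · simp only [mem_insert, mem_singleton, not_or] at ha
    rw [h a ha.1 ha.2.1 ha.2.2, sub_self]

section Degrees

variable {n : ℕ}

lemma deg_eq_ncard (G : SimpleGraph (Fin n)) (v : Fin n) : deg G v = (G.neighborSet v).ncard :=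
  rfl

lemma countDeg_congr {d : ℕ} {G H : SimpleGraph (Fin n)} (h : ∀ a, deg G a = d ↔ deg H a = d) :
    countDeg G d = countDeg H d :=
  Nat.card_congr (Equiv.subtypeEquivRight h)

lemma exists_ne_of_two_le_countDeg {d : ℕ} {G : SimpleGraph (Fin n)} (h : 2 ≤ countDeg G d) :
    ∃ u v, u ≠ v ∧ deg G u = d ∧ deg G v = d := by
  obtain ⟨⟨u, hu⟩, ⟨v, hv⟩, huv⟩ := Finite.one_lt_card_iff_nontrivial.1 h
  exact ⟨u, v, fun h ↦ huv (Subtype.ext h), hu, hv⟩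

lemma SimpleGraph.IsTree.exists_deg_eq_one [Nontrivial (Fin n)] {T : SimpleGraph (Fin n)}
    (hT : T.IsTree) : ∃ w, deg T w = 1 := by
  classical
  obtain ⟨w, hw⟩ := hT.exists_vert_degree_one_of_nontrivial
  exact ⟨w, by rw [deg, Nat.card_eq_fintype_card, SimpleGraph.card_neighborSet_eq_degree, hw]⟩

lemma SimpleGraph.IsTree.exists_isTree_deg_eq_three {T : SimpleGraph (Fin n)} (hT : T.IsTree)
    {u v w : Fin n} (huv : u ≠ v) (hu : deg T u = 4) (hv : deg T v = 4) (hw : deg T w = 1) :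
    ∃ T' : SimpleGraph (Fin n), T'.IsTree ∧ deg T' u = 3 ∧ deg T' v = 3 ∧ deg T' w = 3 ∧
      ∀ a, a ≠ u → a ≠ v → a ≠ w → deg T' a = deg T a := by
  simp only [deg_eq_ncard] at *
  have huw : u ≠ w := by rintro rfl; omega
  have hvw : v ≠ w := by rintro rfl; omega
  obtain ⟨T₁, hT₁, hu₁, hw₁, h₁⟩ := hT.exists_isTree_transfer_degree huw (by omega)
  have hv₁ := h₁ v huv.symm hvw
  obtain ⟨T₂, hT₂, hv₂, hw₂, h₂⟩ := hT₁.exists_isTree_transfer_degree hvw (by omega)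
  refine ⟨T₂, hT₂, by rw [h₂ u huv huw]; omega, by omega, by omega, fun a hau hav haw ↦ ?_⟩
  rw [h₂ a hav haw, h₁ a hau haw]

lemma SimpleGraph.IsTree.exists_isTree_sum_deg_sub {T : SimpleGraph (Fin n)} (hT : T.IsTree)
    (hdeg : 2 ≤ countDeg T 4) :
    ∃ T' : SimpleGraph (Fin n), T'.IsTree ∧ countDeg T' 2 = countDeg T 2 ∧
      ∀ F : ℕ → ℝ, ∑ a, F (deg T a) - ∑ a, F (deg T' a) = 2 * F 4 + F 1 - 3 * F 3 := by
  obtain ⟨u, v, huv, hu, hv⟩ := exists_ne_of_two_le_countDeg hdeg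
  have : Nontrivial (Fin n) := ⟨u, v, huv⟩
  obtain ⟨w, hw⟩ := hT.exists_deg_eq_one
  obtain ⟨T', hT', hu', hv', hw', hother⟩ := hT.exists_isTree_deg_eq_three huv hu hv hw
  have huw : u ≠ w := by rintro rfl; omega
  have hvw : v ≠ w := by rintro rfl; omega
  refine ⟨T', hT', countDeg_congr fun a ↦ ?_, fun F ↦ ?_⟩
  · by_cases hau : a = u; · subst hau; omega
    by_cases hav : a = v; · subst hav; omega
    by_cases haw : a = w; · subst haw; omega
    rw [hother a hau hav haw]
  · rw [sum_sub_sum_eq_of_eq_off_three (f := fun a ↦ F (deg T a)) huv huw hvw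
      fun a hau hav haw ↦ by rw [hother a hau hav haw], hu, hv, hw, hu', hv', hw']
    ring

end Degrees

lemma eight_mul_sq_sub_sub_one_pos {a : ℝ} (ha : (1 + √33) / 16 < a) : 0 < 8 * a ^ 2 - a - 1 := by
  have hs : √33 ^ 2 = 33 := sq_sqrt (by norm_num)
  have hfactor : 8 * a ^ 2 - a - 1 = 8 * (a - (1 + √33) / 16) * (a - (1 - √33) / 16) := by
    linear_combination hs / 32
  rw [hfactor]
  have : 0 < √33 := by positivity
  exact mul_pos (mul_pos (by norm_num) (by linarith)) (by linarith)

theorem stmt17_general (n k : ℕ)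
    (T : SimpleGraph (Fin n)) (hT : T.IsTree) (hseg : countDeg T 2 = n - k - 1)
    (hdeg : 2 ≤ countDeg T 4) :
    ∃ T' : SimpleGraph (Fin n), T'.IsTree ∧ countDeg T' 2 = n - k - 1 ∧
      (∀ α : ℝ, (α < 0 ∨ 1 < α) → R0 T α > R0 T' α) ∧
      (∀ α : ℝ, 0 < α → α < 1 → R0 T α < R0 T' α) ∧
      (∀ a : ℝ, 1 < a → SEI T a > SEI T' a) ∧
      (∀ a : ℝ, (1 + Real.sqrt 33) / 16 < a → a < 1 → SEI T a < SEI T' a) := by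
  obtain ⟨T', hT', hcount, hsum⟩ := hT.exists_isTree_sum_deg_sub hdeg
  have hR0 (α : ℝ) : R0 T α - R0 T' α = 2 * 4 ^ α + 1 - 3 * 3 ^ α := by
    simpa [R0] using hsum fun d ↦ (d : ℝ) ^ α
  have hSEI (a : ℝ) : SEI T a - SEI T' a = a * (a - 1) * (8 * a ^ 2 - a - 1) := by
    rw [SEI, SEI, hsum fun d ↦ (d : ℝ) * a ^ d]
    push_cast
    ring
  refine ⟨T', hT', hcount.trans hseg, fun α hα ↦ ?_, fun α h₀ h₁ ↦ ?_, fun a ha ↦ ?_,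
    fun a ha₀ ha₁ ↦ ?_⟩
  · linarith [hR0 α, three_mul_three_rpow_lt hα]
  · linarith [hR0 α, two_mul_four_rpow_add_one_lt h₀ h₁]
  · have hq : 0 < 8 * a ^ 2 - a - 1 := by nlinarith
    nlinarith [hSEI a, mul_pos (mul_pos (by linarith : 0 < a) (by linarith : 0 < a - 1)) hq]
  · have hq := eight_mul_sq_sub_sub_one_pos ha₀
    have ha : 0 < a := lt_trans (by positivity) ha₀
    nlinarith [hSEI a, mul_pos (mul_pos ha (by linarith : 0 < 1 - a)) hq]

theorem stmt17 (n k : ℕ) (hn : 6 ≤ n) (hkl : 3 ≤ k) (hku : k ≤ n - 2)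
    (T : SimpleGraph (Fin n)) (hT : T.IsTree) (hseg : countDeg T 2 = n - k - 1)
    (hdeg : 2 ≤ countDeg T 4) :
    ∃ T' : SimpleGraph (Fin n), T'.IsTree ∧ countDeg T' 2 = n - k - 1 ∧
      (∀ α : ℝ, (α < 0 ∨ 1 < α) → R0 T α > R0 T' α) ∧
      (∀ α : ℝ, 0 < α → α < 1 → R0 T α < R0 T' α) ∧
      (∀ a : ℝ, 1 < a → SEI T a > SEI T' a) ∧
      (∀ a : ℝ, (1 + Real.sqrt 33) / 16 < a → a < 1 → SEI T a < SEI T' a) :=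
  stmt17_general n k T hT hseg hdeg
end
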